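/- Under the conditions 0 < E₁q₀ < 1, 0 < α < min{α₀⁽¹⁾, α₁⁽¹⁾} where α₀⁽¹⁾ = (4/27)(1 − E₁q₀)³/(a²q₀) and α₁⁽¹⁾ = 1/(3q₀(1 − E₁q₀)), and p ∈ (p₁⁽¹⁾, p₂⁽¹⁾) (positive zeros of αq₀p³ − (1−E₁q₀)p + a) with t₁ = q₀(E₁ + 3αp²) < 1, the operator T₁(U) = −A₁U + αF(U) + f is a contraction of the closed ball of radius p in C(γ) and has a unique fixed point there. -/

import Mathlib

/-!
Both integral kernels have constant modulus `κ / (2 cos φ)` on `γ`, an interval of length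
`4πδ`, so each integral operator is bounded by `q₀` in the sup norm. Hence `T₁` maps the ball
of radius `p` into the ball of radius `E₁q₀p + αq₀p³ + a`, which is at most `p` exactly when `p`
lies between the positive roots of `αq₀p³ − (1 − E₁q₀)p + a`. On that ball the Kerr
nonlinearity `u ↦ |u|²u` is `3p²`-Lipschitz, so `T₁` is Lipschitz with constant `t₁ < 1`.
Banach's fixed point theorem in the closed ball of `C(γ)` gives the fixed point; uniqueness
follows from the same estimate at a point where the difference of two fixed points is maximal.
-/

/-- The nonlinear operator `T₁(U) = −A₁U + αF(U) + f` of the lossy-layer problem, with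
`A₁` the integral operator with kernel `k₁(z,z₀) = −(iκ/(2cosφ))exp(i·2κcosφ|z−z₀|·ε₂(z₀))`
weighted by `ε₁`, `F` the Kerr cubic integral operator with kernel
`k(t) = (iκ/(2cosφ))e^{2iκcosφ|t|}`, and `f(z) = a·e^{−iκcosφ(z−2πδ)}`. -/
noncomputable def Tmap1 (δ κ α a φ : ℝ) (ε₁ ε₂ : ℝ → ℝ) (U : ℝ → ℂ) (z : ℝ) : ℂ :=
  -(∫ z₀ in (-(2 * Real.pi * δ))..(2 * Real.pi * δ),
      (-(Complex.I * κ / (2 * Real.cos φ))) *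
        Complex.exp (Complex.I * (2 * κ * Real.cos φ * |z - z₀| * ε₂ z₀)) *
        ((ε₁ z₀ : ℝ) : ℂ) * U z₀)
  + α * (∫ z₀ in (-(2 * Real.pi * δ))..(2 * Real.pi * δ),
      (Complex.I * κ / (2 * Real.cos φ)) *
        Complex.exp (2 * Complex.I * κ * Real.cos φ * |z - z₀|) *
        ((‖U z₀‖ ^ 2 : ℝ) : ℂ) * U z₀)
  + a * Complex.exp (-Complex.I * κ * Real.cos φ * (z - 2 * Real.pi * δ))

open Set Complex intervalIntegral

theorem norm_norm_sq_smul_le {E : Type*} [NormedAddCommGroup E] [NormedSpace ℝ E] {p : ℝ}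
    {u : E} (hu : ‖u‖ ≤ p) : ‖‖u‖ ^ 2 • u‖ ≤ p ^ 3 := by
  rw [norm_smul, norm_pow, norm_norm, ← pow_succ]
  exact pow_le_pow_left₀ (norm_nonneg u) hu 3

theorem norm_sq_smul_sub_norm_sq_smul_le {E : Type*} [NormedAddCommGroup E] [NormedSpace ℝ E]
    {p : ℝ} {u v : E} (hu : ‖u‖ ≤ p) (hv : ‖v‖ ≤ p) :
    ‖‖u‖ ^ 2 • u - ‖v‖ ^ 2 • v‖ ≤ 3 * p ^ 2 * ‖u - v‖ := by
  have hp : 0 ≤ p := (norm_nonneg u).trans hu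
  have hsq : |‖u‖ ^ 2 - ‖v‖ ^ 2| ≤ 2 * p * ‖u - v‖ := by
    rw [sq_sub_sq, abs_mul, abs_of_nonneg (by positivity : 0 ≤ ‖u‖ + ‖v‖)]
    exact mul_le_mul (by linarith) (abs_norm_sub_norm_le u v) (abs_nonneg _) (by positivity)
  calc ‖‖u‖ ^ 2 • u - ‖v‖ ^ 2 • v‖ = ‖‖u‖ ^ 2 • (u - v) + (‖u‖ ^ 2 - ‖v‖ ^ 2) • v‖ := by
        rw [smul_sub, sub_smul]; abel_nf
    _ ≤ ‖u‖ ^ 2 * ‖u - v‖ + |‖u‖ ^ 2 - ‖v‖ ^ 2| * ‖v‖ := by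
        refine (norm_add_le _ _).trans_eq ?_
        rw [norm_smul, norm_smul, Real.norm_eq_abs, Real.norm_eq_abs, abs_of_nonneg (by positivity)]
    _ ≤ p ^ 2 * ‖u - v‖ + 2 * p * ‖u - v‖ * p := by
        gcongr
    _ = 3 * p ^ 2 * ‖u - v‖ := by ring

theorem cubic_nonpos_of_mem_Ioo_roots {b c a p₁ p₂ p : ℝ} (hb : 0 < b)
    (hz₁ : b * p₁ ^ 3 - c * p₁ + a = 0) (hz₂ : b * p₂ ^ 3 - c * p₂ + a = 0)
    (hp₁ : 0 < p₁) (hp : p ∈ Ioo p₁ p₂) : b * p ^ 3 - c * p + a ≤ 0 := by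
  obtain ⟨hp₁p, hpp₂⟩ := hp
  -- Vieta: the third root is `-(p₁ + p₂)`, which is negative.
  have hc : c = b * (p₁ ^ 2 + p₁ * p₂ + p₂ ^ 2) := by
    have : (p₁ - p₂) * (b * (p₁ ^ 2 + p₁ * p₂ + p₂ ^ 2) - c) = 0 := by
      linear_combination hz₁ - hz₂
    linarith [(mul_eq_zero.1 this).resolve_left (by linarith)]
  have hfactor : b * p ^ 3 - c * p + a = b * (p - p₁) * (p - p₂) * (p + p₁ + p₂) := by
    subst hc; linear_combination hz₁
  rw [hfactor]
  have : 0 < b * (p - p₁) * (p + p₁ + p₂) := by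
    have := sub_pos.2 hp₁p
    have : 0 < p + p₁ + p₂ := by linarith
    positivity
  nlinarith

theorem norm_integral_mul_le {s t c C : ℝ} (hst : s ≤ t) {k g : ℝ → ℂ} (hc : 0 ≤ c)
    (hk : ∀ x ∈ Icc s t, ‖k x‖ ≤ c) (hg : ∀ x ∈ Icc s t, ‖g x‖ ≤ C) :
    ‖∫ x in s..t, k x * g x‖ ≤ c * (t - s) * C := by
  have hbound : ∀ x ∈ uIoc s t, ‖k x * g x‖ ≤ c * C := by
    intro x hx
    rw [uIoc_of_le hst] at hx
    rw [norm_mul]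
    exact mul_le_mul (hk x (Ioc_subset_Icc_self hx)) (hg x (Ioc_subset_Icc_self hx))
      (norm_nonneg _) hc
  calc ‖∫ x in s..t, k x * g x‖ ≤ c * C * |t - s| := norm_integral_le_of_norm_le_const hbound
    _ = c * (t - s) * C := by rw [abs_of_nonneg (sub_nonneg.2 hst)]; ring

theorem intervalIntegrable_mul_of_continuousOn {s t : ℝ} (hst : s ≤ t) {k g : ℝ → ℂ}
    (hk : Continuous k) (hg : ContinuousOn g (Icc s t)) :
    IntervalIntegrable (fun x => k x * g x) MeasureTheory.volume s t :=
  (hk.continuousOn.mul hg).intervalIntegrable_of_Icc hst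

theorem norm_ofReal_mul_le {e E₁ M : ℝ} {u : ℂ} (he : |e| ≤ E₁) (hu : ‖u‖ ≤ M) :
    ‖(e : ℂ) * u‖ ≤ E₁ * M := by
  rw [norm_mul, norm_real, Real.norm_eq_abs]
  exact mul_le_mul he hu (norm_nonneg u) ((abs_nonneg e).trans he)

-- The kernels `k₁` of `A₁` (before the weight `ε₁`) and `k` of `F`.
noncomputable def lossKernel (κ φ : ℝ) (ε₂ : ℝ → ℝ) (z x : ℝ) : ℂ :=
  -(I * κ / (2 * Real.cos φ)) * exp (I * (2 * κ * Real.cos φ * |z - x| * ε₂ x))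

noncomputable def kerrKernel (κ φ z x : ℝ) : ℂ :=
  I * κ / (2 * Real.cos φ) * exp (2 * I * κ * Real.cos φ * |z - x|)

section Kernels

variable {κ φ : ℝ} {ε₂ : ℝ → ℝ}

theorem norm_lossKernel (hκ : 0 < κ) (hcos : 0 < Real.cos φ) (z x : ℝ) :
    ‖lossKernel κ φ ε₂ z x‖ = κ / (2 * Real.cos φ) := by
  simp [lossKernel, Complex.norm_exp, abs_of_pos hκ, abs_of_pos hcos, -ofReal_cos]

theorem norm_kerrKernel (hκ : 0 < κ) (hcos : 0 < Real.cos φ) (z x : ℝ) :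
    ‖kerrKernel κ φ z x‖ = κ / (2 * Real.cos φ) := by
  simp [kerrKernel, Complex.norm_exp, abs_of_pos hκ, abs_of_pos hcos, -ofReal_cos]

theorem continuous_lossKernel (h₂ : Continuous ε₂) :
    Continuous (Function.uncurry (lossKernel κ φ ε₂)) := by
  unfold lossKernel; fun_prop

theorem continuous_kerrKernel : Continuous (Function.uncurry (kerrKernel κ φ)) := by
  unfold kerrKernel; fun_prop

end Kernels

theorem Tmap1_eq (δ κ α a φ : ℝ) (ε₁ ε₂ : ℝ → ℝ) (U : ℝ → ℂ) (z : ℝ) :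
    Tmap1 δ κ α a φ ε₁ ε₂ U z =
      -(∫ x in (-(2 * Real.pi * δ))..(2 * Real.pi * δ), lossKernel κ φ ε₂ z x * (ε₁ x * U x))
      + α * (∫ x in (-(2 * Real.pi * δ))..(2 * Real.pi * δ),
          kerrKernel κ φ z x * (‖U x‖ ^ 2 • U x))
      + a * exp (-I * κ * Real.cos φ * (z - 2 * Real.pi * δ)) := by
  simp only [Tmap1, lossKernel, kerrKernel, real_smul, mul_assoc]

section Tmap1Estimates

variable {δ κ α a φ E₁ p : ℝ} {ε₁ ε₂ : ℝ → ℝ}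

theorem kernel_mul_length_eq (hcos : 0 < Real.cos φ) :
    κ / (2 * Real.cos φ) * (2 * Real.pi * δ - -(2 * Real.pi * δ)) =
      2 * Real.pi * δ * κ / Real.cos φ := by
  field_simp; ring

theorem norm_neg_add_mul_le (hα : 0 ≤ α) (X Y : ℂ) : ‖-X + α * Y‖ ≤ ‖X‖ + α * ‖Y‖ := by
  refine (norm_add_le _ _).trans_eq ?_
  rw [norm_neg, norm_mul, norm_real, Real.norm_of_nonneg hα]

theorem norm_Tmap1_le (hδ : 0 < δ) (hκ : 0 < κ) (hα : 0 ≤ α) (ha : 0 ≤ a)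
    (hcos : 0 < Real.cos φ)
    (hε₁ : ∀ z ∈ Icc (-(2 * Real.pi * δ)) (2 * Real.pi * δ), |ε₁ z| ≤ E₁)
    {U : ℝ → ℂ} (hU : ∀ z ∈ Icc (-(2 * Real.pi * δ)) (2 * Real.pi * δ), ‖U z‖ ≤ p) (z : ℝ) :
    ‖Tmap1 δ κ α a φ ε₁ ε₂ U z‖ ≤
      2 * Real.pi * δ * κ / Real.cos φ * (E₁ * p)
        + α * (2 * Real.pi * δ * κ / Real.cos φ * p ^ 3) + a := by
  have hγ : -(2 * Real.pi * δ) ≤ 2 * Real.pi * δ := neg_le_self (by positivity)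
  have hc : 0 ≤ κ / (2 * Real.cos φ) := by positivity
  have hlin := norm_integral_mul_le hγ hc (fun x _ => (norm_lossKernel (ε₂ := ε₂) hκ hcos z x).le)
    (fun x hx => norm_ofReal_mul_le (hε₁ x hx) (hU x hx))
  have hkerr := norm_integral_mul_le hγ hc (fun x _ => (norm_kerrKernel hκ hcos z x).le)
    (fun x hx => norm_norm_sq_smul_le (hU x hx))
  have hforce : ‖(a : ℂ) * exp (-I * κ * Real.cos φ * (z - 2 * Real.pi * δ))‖ = a := by
    simp [norm_exp, abs_of_nonneg ha]
  rw [kernel_mul_length_eq hcos] at hlin hkerr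
  rw [Tmap1_eq]
  refine (norm_add_le _ _).trans ?_
  rw [hforce]
  gcongr
  exact (norm_neg_add_mul_le hα _ _).trans (by gcongr)

theorem Tmap1_sub_eq (hδ : 0 ≤ δ) (h₁ : Continuous ε₁) (h₂ : Continuous ε₂) {U V : ℝ → ℂ}
    (hUc : ContinuousOn U (Icc (-(2 * Real.pi * δ)) (2 * Real.pi * δ)))
    (hVc : ContinuousOn V (Icc (-(2 * Real.pi * δ)) (2 * Real.pi * δ))) (z : ℝ) :
    Tmap1 δ κ α a φ ε₁ ε₂ U z - Tmap1 δ κ α a φ ε₁ ε₂ V z =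
      -(∫ x in (-(2 * Real.pi * δ))..(2 * Real.pi * δ),
          lossKernel κ φ ε₂ z x * (ε₁ x * (U x - V x)))
      + α * (∫ x in (-(2 * Real.pi * δ))..(2 * Real.pi * δ),
          kerrKernel κ φ z x * (‖U x‖ ^ 2 • U x - ‖V x‖ ^ 2 • V x)) := by
  have hγ : -(2 * Real.pi * δ) ≤ 2 * Real.pi * δ := neg_le_self (by positivity)
  have hloss := (continuous_lossKernel (κ := κ) (φ := φ) h₂).uncurry_left z
  have hkerr := (continuous_kerrKernel (κ := κ) (φ := φ)).uncurry_left z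
  have hweighted {W : ℝ → ℂ} (hW : ContinuousOn W (Icc (-(2 * Real.pi * δ)) (2 * Real.pi * δ))) :
      ContinuousOn (fun x => (ε₁ x : ℂ) * W x) (Icc (-(2 * Real.pi * δ)) (2 * Real.pi * δ)) :=
    (continuous_ofReal.comp h₁).continuousOn.mul hW
  have hkerrTerm {W : ℝ → ℂ} (hW : ContinuousOn W (Icc (-(2 * Real.pi * δ)) (2 * Real.pi * δ))) :
      ContinuousOn (fun x => ‖W x‖ ^ 2 • W x) (Icc (-(2 * Real.pi * δ)) (2 * Real.pi * δ)) :=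
    (hW.norm.pow 2).smul hW
  have hlin := integral_sub (intervalIntegrable_mul_of_continuousOn hγ hloss (hweighted hUc))
    (intervalIntegrable_mul_of_continuousOn hγ hloss (hweighted hVc))
  have hnonlin := integral_sub (intervalIntegrable_mul_of_continuousOn hγ hkerr (hkerrTerm hUc))
    (intervalIntegrable_mul_of_continuousOn hγ hkerr (hkerrTerm hVc))
  simp only [← mul_sub] at hlin hnonlin
  rw [hlin, hnonlin, Tmap1_eq, Tmap1_eq]
  ring

theorem norm_Tmap1_sub_le (hδ : 0 < δ) (hκ : 0 < κ) (hα : 0 ≤ α) (hcos : 0 < Real.cos φ)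
    (h₁ : Continuous ε₁) (h₂ : Continuous ε₂)
    (hε₁ : ∀ z ∈ Icc (-(2 * Real.pi * δ)) (2 * Real.pi * δ), |ε₁ z| ≤ E₁)
    {U V : ℝ → ℂ} (hUc : ContinuousOn U (Icc (-(2 * Real.pi * δ)) (2 * Real.pi * δ)))
    (hVc : ContinuousOn V (Icc (-(2 * Real.pi * δ)) (2 * Real.pi * δ)))
    (hU : ∀ z ∈ Icc (-(2 * Real.pi * δ)) (2 * Real.pi * δ), ‖U z‖ ≤ p)
    (hV : ∀ z ∈ Icc (-(2 * Real.pi * δ)) (2 * Real.pi * δ), ‖V z‖ ≤ p)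
    {M : ℝ} (hM : ∀ z ∈ Icc (-(2 * Real.pi * δ)) (2 * Real.pi * δ), ‖U z - V z‖ ≤ M) (z : ℝ) :
    ‖Tmap1 δ κ α a φ ε₁ ε₂ U z - Tmap1 δ κ α a φ ε₁ ε₂ V z‖ ≤
      2 * Real.pi * δ * κ / Real.cos φ * (E₁ + 3 * α * p ^ 2) * M := by
  have hγ : -(2 * Real.pi * δ) ≤ 2 * Real.pi * δ := neg_le_self (by positivity)
  have hc : 0 ≤ κ / (2 * Real.cos φ) := by positivity
  have hlin := norm_integral_mul_le hγ hc (fun x _ => (norm_lossKernel (ε₂ := ε₂) hκ hcos z x).le)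
    (fun x hx => norm_ofReal_mul_le (hε₁ x hx) (hM x hx))
  have hnonlin := norm_integral_mul_le hγ hc (fun x _ => (norm_kerrKernel hκ hcos z x).le)
    (fun x hx => (norm_sq_smul_sub_norm_sq_smul_le (hU x hx) (hV x hx)).trans
      (mul_le_mul_of_nonneg_left (hM x hx) (by positivity)))
  rw [kernel_mul_length_eq hcos] at hlin hnonlin
  rw [Tmap1_sub_eq hδ.le h₁ h₂ hUc hVc]
  calc _ ≤ _ := norm_neg_add_mul_le hα _ _
    _ ≤ 2 * Real.pi * δ * κ / Real.cos φ * (E₁ * M)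
          + α * (2 * Real.pi * δ * κ / Real.cos φ * (3 * p ^ 2 * M)) := by gcongr
    _ = 2 * Real.pi * δ * κ / Real.cos φ * (E₁ + 3 * α * p ^ 2) * M := by ring

theorem continuous_Tmap1 (h₁ : Continuous ε₁) (h₂ : Continuous ε₂) {U : ℝ → ℂ}
    (hU : Continuous U) : Continuous (Tmap1 δ κ α a φ ε₁ ε₂ U) := by
  simp only [funext (Tmap1_eq δ κ α a φ ε₁ ε₂ U)]
  have hloss := continuous_lossKernel (κ := κ) (φ := φ) h₂
  have hkerr := continuous_kerrKernel (κ := κ) (φ := φ)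
  refine ((continuous_parametric_intervalIntegral_of_continuous' ?_ _ _).neg.add
    (continuous_const.mul (continuous_parametric_intervalIntegral_of_continuous' ?_ _ _))).add
    (by fun_prop)
  · exact hloss.mul ((continuous_ofReal.comp h₁).mul hU).snd'
  · exact hkerr.mul (((hU.norm.pow 2).smul hU).snd')

end Tmap1Estimates

section FixedPoint

variable {E : Type*} [NormedAddCommGroup E] {a b p K : ℝ} {T : (ℝ → E) → ℝ → E}

/- Functions `ℝ → E` are seen only through their restrictions to `s`: the two conditions below
say that `T` maps the closed sup-norm ball of radius `p` in `C(s, E)` into itself, and is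
`K`-Lipschitz there. -/

def MapsClosedBallOn (T : (ℝ → E) → ℝ → E) (s : Set ℝ) (p : ℝ) : Prop :=
  ∀ U : ℝ → E, ContinuousOn U s → (∀ z ∈ s, ‖U z‖ ≤ p) → ∀ z ∈ s, ‖T U z‖ ≤ p

def LipschitzOnClosedBallOn (T : (ℝ → E) → ℝ → E) (s : Set ℝ) (p K : ℝ) : Prop :=
  ∀ U V : ℝ → E, ContinuousOn U s → ContinuousOn V s →
    (∀ z ∈ s, ‖U z‖ ≤ p) → (∀ z ∈ s, ‖V z‖ ≤ p) →
    ∀ M : ℝ, (∀ z ∈ s, ‖U z - V z‖ ≤ M) → ∀ z ∈ s, ‖T U z - T V z‖ ≤ K * M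

theorem LipschitzOnClosedBallOn.eq_of_fixed (hlip : LipschitzOnClosedBallOn T (Icc a b) p K)
    (hK : K < 1)
    {U V : ℝ → E} (hUc : ContinuousOn U (Icc a b)) (hVc : ContinuousOn V (Icc a b))
    (hU : ∀ z ∈ Icc a b, ‖U z‖ ≤ p) (hV : ∀ z ∈ Icc a b, ‖V z‖ ≤ p)
    (hUfix : ∀ z ∈ Icc a b, U z = T U z) (hVfix : ∀ z ∈ Icc a b, V z = T V z) :
    ∀ z ∈ Icc a b, V z = U z := by
  intro z hz
  obtain ⟨z₀, hz₀, hmax⟩ := isCompact_Icc.exists_isMaxOn ⟨z, hz⟩ (hVc.sub hUc).norm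
  have hself : ‖V z₀ - U z₀‖ ≤ K * ‖V z₀ - U z₀‖ := by
    have := hlip V U hVc hUc hV hU _ (fun y hy => hmax hy) z₀ hz₀
    rwa [← hVfix z₀ hz₀, ← hUfix z₀ hz₀] at this
  have hzero : ‖V z₀ - U z₀‖ ≤ 0 := by nlinarith [norm_nonneg (V z₀ - U z₀)]
  exact sub_eq_zero.1 (norm_le_zero_iff.1 ((hmax hz).trans hzero))

theorem LipschitzOnClosedBallOn.exists_fixed [CompleteSpace E]
    (hlip : LipschitzOnClosedBallOn T (Icc a b) p K) (hab : a ≤ b) (hp : 0 ≤ p)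
    (hK₀ : 0 ≤ K) (hK : K < 1)
    (hcont : ∀ U : ℝ → E, Continuous U → ContinuousOn (T U) (Icc a b))
    (hball : MapsClosedBallOn T (Icc a b) p) :
    ∃ U : ℝ → E, ContinuousOn U (Icc a b) ∧ (∀ z ∈ Icc a b, ‖U z‖ ≤ p) ∧
      ∀ z ∈ Icc a b, U z = T U z := by
  let X := Metric.closedBall (0 : C(Icc a b, E)) p
  have hmem (g : C(Icc a b, E)) : g ∈ X ↔ ∀ x, ‖g x‖ ≤ p := by
    rw [Metric.mem_closedBall, dist_zero_right, ContinuousMap.norm_le _ hp]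
  have : CompleteSpace X := Metric.isClosed_closedBall.completeSpace_coe
  have : Nonempty X := ⟨⟨0, Metric.mem_closedBall_self hp⟩⟩
  -- Functions on `[a, b]` are passed to `T` through their constant extension to `ℝ`.
  let ext (g : X) : ℝ → E := IccExtend hab g.1
  have hext_cont (g : X) : Continuous (ext g) := g.1.continuous.Icc_extend'
  have hext_le (g : X) : ∀ z ∈ Icc a b, ‖ext g z‖ ≤ p := fun z hz => by
    simpa only [ext, IccExtend_of_mem hab _ hz] using (hmem g.1).1 g.2 ⟨z, hz⟩
  let Φ (g : X) : X :=
    ⟨⟨fun x => T (ext g) x, (hcont _ (hext_cont g)).domRestrict⟩,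
      (hmem _).2 fun x => hball _ (hext_cont g).continuousOn (hext_le g) x x.2⟩
  have hΦ : ContractingWith ⟨K, hK₀⟩ Φ := by
    refine ⟨hK, LipschitzWith.of_dist_le_mul fun g h => ?_⟩
    refine (ContinuousMap.dist_le (by positivity)).2 fun x => ?_
    rw [dist_eq_norm]
    refine hlip _ _ (hext_cont g).continuousOn (hext_cont h).continuousOn (hext_le g)
      (hext_le h) _ (fun z hz => ?_) x x.2
    have := ContinuousMap.dist_apply_le_dist (f := g.1) (g := h.1) ⟨z, hz⟩
    rwa [← Subtype.dist_eq, dist_eq_norm, ← IccExtend_of_mem hab g.1 hz,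
      ← IccExtend_of_mem hab h.1 hz] at this
  set u := ContractingWith.fixedPoint Φ hΦ
  refine ⟨ext u, (hext_cont u).continuousOn, hext_le u, fun z hz => ?_⟩
  have hfix : (Φ u).1 ⟨z, hz⟩ = u.1 ⟨z, hz⟩ :=
    congrArg (fun g : X => g.1 ⟨z, hz⟩) (ContractingWith.fixedPoint_isFixedPt hΦ)
  show IccExtend hab u.1 z = T (ext u) z
  rw [IccExtend_of_mem hab _ hz, ← hfix]
  rfl

end FixedPoint

theorem stmt_11_general (δ κ α a E₁ φ : ℝ)
    (hδ : 0 < δ) (hκ : 0 < κ) (hα : 0 < α) (ha : 0 < a) (hE₁ : 0 < E₁)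
    (hφ : |φ| < Real.pi / 2)
    (q₀ : ℝ) (hq₀ : q₀ = 2 * Real.pi * δ * κ / Real.cos φ)
    (ε₁ ε₂ : ℝ → ℝ) (h1 : Continuous ε₁) (h2 : Continuous ε₂)
    (hb1 : ∀ z ∈ Set.Icc (-(2 * Real.pi * δ)) (2 * Real.pi * δ), 0 < ε₁ z ∧ ε₁ z ≤ E₁)
    (p₁ p₂ p : ℝ) (hp₁ : 0 < p₁)
    (hz₁ : α * q₀ * p₁ ^ 3 - (1 - E₁ * q₀) * p₁ + a = 0)
    (hz₂ : α * q₀ * p₂ ^ 3 - (1 - E₁ * q₀) * p₂ + a = 0)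
    (hp : p ∈ Set.Ioo p₁ p₂)
    (ht₁ : q₀ * (E₁ + 3 * α * p ^ 2) < 1) :
    (∀ U : ℝ → ℂ, ContinuousOn U (Set.Icc (-(2 * Real.pi * δ)) (2 * Real.pi * δ)) →
      (∀ z ∈ Set.Icc (-(2 * Real.pi * δ)) (2 * Real.pi * δ), ‖U z‖ ≤ p) →
      ∀ z ∈ Set.Icc (-(2 * Real.pi * δ)) (2 * Real.pi * δ),
        ‖Tmap1 δ κ α a φ ε₁ ε₂ U z‖ ≤ p) ∧
    (∀ U V : ℝ → ℂ,
      ContinuousOn U (Set.Icc (-(2 * Real.pi * δ)) (2 * Real.pi * δ)) →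
      ContinuousOn V (Set.Icc (-(2 * Real.pi * δ)) (2 * Real.pi * δ)) →
      (∀ z ∈ Set.Icc (-(2 * Real.pi * δ)) (2 * Real.pi * δ), ‖U z‖ ≤ p) →
      (∀ z ∈ Set.Icc (-(2 * Real.pi * δ)) (2 * Real.pi * δ), ‖V z‖ ≤ p) →
      ∀ M : ℝ, (∀ z ∈ Set.Icc (-(2 * Real.pi * δ)) (2 * Real.pi * δ), ‖U z - V z‖ ≤ M) →
      ∀ z ∈ Set.Icc (-(2 * Real.pi * δ)) (2 * Real.pi * δ),
        ‖Tmap1 δ κ α a φ ε₁ ε₂ U z - Tmap1 δ κ α a φ ε₁ ε₂ V z‖ ≤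
          q₀ * (E₁ + 3 * α * p ^ 2) * M) ∧
    (∃ U : ℝ → ℂ, ContinuousOn U (Set.Icc (-(2 * Real.pi * δ)) (2 * Real.pi * δ)) ∧
      (∀ z ∈ Set.Icc (-(2 * Real.pi * δ)) (2 * Real.pi * δ), ‖U z‖ ≤ p) ∧
      (∀ z ∈ Set.Icc (-(2 * Real.pi * δ)) (2 * Real.pi * δ),
        U z = Tmap1 δ κ α a φ ε₁ ε₂ U z) ∧
      ∀ V : ℝ → ℂ, ContinuousOn V (Set.Icc (-(2 * Real.pi * δ)) (2 * Real.pi * δ)) →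
        (∀ z ∈ Set.Icc (-(2 * Real.pi * δ)) (2 * Real.pi * δ), ‖V z‖ ≤ p) →
        (∀ z ∈ Set.Icc (-(2 * Real.pi * δ)) (2 * Real.pi * δ),
          V z = Tmap1 δ κ α a φ ε₁ ε₂ V z) →
        ∀ z ∈ Set.Icc (-(2 * Real.pi * δ)) (2 * Real.pi * δ), V z = U z) := by
  have hcos : 0 < Real.cos φ := Real.cos_pos_of_mem_Ioo (abs_lt.1 hφ)
  have hε₁ : ∀ z ∈ Icc (-(2 * Real.pi * δ)) (2 * Real.pi * δ), |ε₁ z| ≤ E₁ :=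
    fun z hz => (abs_of_pos (hb1 z hz).1).trans_le (hb1 z hz).2
  subst hq₀
  have hp₀ : 0 < p := hp₁.trans hp.1
  have hcubic := cubic_nonpos_of_mem_Ioo_roots (by positivity) hz₁ hz₂ hp₁ hp
  have hball :
      MapsClosedBallOn (Tmap1 δ κ α a φ ε₁ ε₂) (Icc (-(2 * Real.pi * δ)) (2 * Real.pi * δ)) p :=
    fun U _ hU z _ => (norm_Tmap1_le hδ hκ hα.le ha.le hcos hε₁ hU z).trans (by linarith)
  have hlip : LipschitzOnClosedBallOn (Tmap1 δ κ α a φ ε₁ ε₂)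
      (Icc (-(2 * Real.pi * δ)) (2 * Real.pi * δ)) p
      (2 * Real.pi * δ * κ / Real.cos φ * (E₁ + 3 * α * p ^ 2)) :=
    fun _ _ hUc hVc hU hV _ hM z _ =>
      norm_Tmap1_sub_le hδ hκ hα.le hcos h1 h2 hε₁ hUc hVc hU hV hM z
  obtain ⟨U, hUc, hU, hUfix⟩ := hlip.exists_fixed (neg_le_self (by positivity)) hp₀.le
    (by positivity) ht₁ (fun U hU => (continuous_Tmap1 h1 h2 hU).continuousOn) hball
  exact ⟨hball, hlip, U, hUc, hU, hUfix, fun V hVc hV hVfix =>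
    hlip.eq_of_fixed ht₁ hUc hVc hU hV hUfix hVfix⟩

/-- Under `0 < E₁q₀ < 1`, `α < min{α₀⁽¹⁾, α₁⁽¹⁾}`, `p ∈ (p₁⁽¹⁾, p₂⁽¹⁾)` and
`t₁ = q₀(E₁ + 3αp²) < 1`, the operator `T₁` is a contraction of the closed ball of
radius `p` in `C(γ)` and has a unique fixed point there. -/
theorem stmt_11 (δ κ α a E₁ φ : ℝ)
    (hδ : 0 < δ) (hκ : 0 < κ) (hα : 0 < α) (ha : 0 < a) (hE₁ : 0 < E₁)
    (hφ : |φ| < Real.pi / 2)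
    (q₀ : ℝ) (hq₀ : q₀ = 2 * Real.pi * δ * κ / Real.cos φ)
    (ε₁ ε₂ : ℝ → ℝ) (h1 : Continuous ε₁) (h2 : Continuous ε₂)
    (hb1 : ∀ z ∈ Set.Icc (-(2 * Real.pi * δ)) (2 * Real.pi * δ), 0 < ε₁ z ∧ ε₁ z ≤ E₁)
    (hb2 : ∀ z ∈ Set.Icc (-(2 * Real.pi * δ)) (2 * Real.pi * δ),
      ε₂ z ∈ Set.Ico 0 (Real.pi / 2))
    (hq1 : E₁ * q₀ < 1)
    (hαsmall : α < min ((4 / 27) * (1 - E₁ * q₀) ^ 3 / (a ^ 2 * q₀))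
      (1 / (3 * q₀ * (1 - E₁ * q₀))))
    (p₁ p₂ p : ℝ) (hp₁ : 0 < p₁) (hp12 : p₁ < p₂)
    (hz₁ : α * q₀ * p₁ ^ 3 - (1 - E₁ * q₀) * p₁ + a = 0)
    (hz₂ : α * q₀ * p₂ ^ 3 - (1 - E₁ * q₀) * p₂ + a = 0)
    (hp : p ∈ Set.Ioo p₁ p₂)
    (ht₁ : q₀ * (E₁ + 3 * α * p ^ 2) < 1) :
    (∀ U : ℝ → ℂ, ContinuousOn U (Set.Icc (-(2 * Real.pi * δ)) (2 * Real.pi * δ)) →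
      (∀ z ∈ Set.Icc (-(2 * Real.pi * δ)) (2 * Real.pi * δ), ‖U z‖ ≤ p) →
      ∀ z ∈ Set.Icc (-(2 * Real.pi * δ)) (2 * Real.pi * δ),
        ‖Tmap1 δ κ α a φ ε₁ ε₂ U z‖ ≤ p) ∧
    (∀ U V : ℝ → ℂ,
      ContinuousOn U (Set.Icc (-(2 * Real.pi * δ)) (2 * Real.pi * δ)) →
      ContinuousOn V (Set.Icc (-(2 * Real.pi * δ)) (2 * Real.pi * δ)) →
      (∀ z ∈ Set.Icc (-(2 * Real.pi * δ)) (2 * Real.pi * δ), ‖U z‖ ≤ p) →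
      (∀ z ∈ Set.Icc (-(2 * Real.pi * δ)) (2 * Real.pi * δ), ‖V z‖ ≤ p) →
      ∀ M : ℝ, (∀ z ∈ Set.Icc (-(2 * Real.pi * δ)) (2 * Real.pi * δ), ‖U z - V z‖ ≤ M) →
      ∀ z ∈ Set.Icc (-(2 * Real.pi * δ)) (2 * Real.pi * δ),
        ‖Tmap1 δ κ α a φ ε₁ ε₂ U z - Tmap1 δ κ α a φ ε₁ ε₂ V z‖ ≤
          q₀ * (E₁ + 3 * α * p ^ 2) * M) ∧
    (∃ U : ℝ → ℂ, ContinuousOn U (Set.Icc (-(2 * Real.pi * δ)) (2 * Real.pi * δ)) ∧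
      (∀ z ∈ Set.Icc (-(2 * Real.pi * δ)) (2 * Real.pi * δ), ‖U z‖ ≤ p) ∧
      (∀ z ∈ Set.Icc (-(2 * Real.pi * δ)) (2 * Real.pi * δ),
        U z = Tmap1 δ κ α a φ ε₁ ε₂ U z) ∧
      ∀ V : ℝ → ℂ, ContinuousOn V (Set.Icc (-(2 * Real.pi * δ)) (2 * Real.pi * δ)) →
        (∀ z ∈ Set.Icc (-(2 * Real.pi * δ)) (2 * Real.pi * δ), ‖V z‖ ≤ p) →
        (∀ z ∈ Set.Icc (-(2 * Real.pi * δ)) (2 * Real.pi * δ),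
          V z = Tmap1 δ κ α a φ ε₁ ε₂ V z) →
        ∀ z ∈ Set.Icc (-(2 * Real.pi * δ)) (2 * Real.pi * δ), V z = U z) :=
  stmt_11_general δ κ α a E₁ φ hδ hκ hα ha hE₁ hφ q₀ hq₀ ε₁ ε₂ h1 h2 hb1 p₁ p₂ p hp₁ hz₁ hz₂ hp ht₁
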